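/- Let k ≥ 4 and let P be a finite set of n points in ℝ² such that every k-element subset determines at least C(k,2) − ⌊k/2⌋ + 2 distinct distances. Then every nonzero distance is spanned by at most ⌊k/2⌋ − 1 pairs of points of P, and hence P determines at least C(n,2)/(⌊k/2⌋ − 1) = Ω(n²) distinct distances. -/

import Mathlib

open scoped Classical

open Finset

/-!
Call a 2-set `{a, b}` a spanning pair of the distance `t` if `dist a b = t`. If `P` had `⌊k/2⌋`
spanning pairs of one distance `t`, they would involve at most `k` points; extend them to a
`k`-subset `S` of `P`. Among the `C(k,2)` pairs of `S`, those `⌊k/2⌋` pairs contribute the single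
distance `t`, so `S` determines at most `C(k,2) - ⌊k/2⌋ + 1` distances, contradicting the
hypothesis. Hence every positive distance has at most `⌊k/2⌋ - 1` spanning pairs, and counting
the `C(n,2)` pairs of `P` by their distance gives the global bound.
-/

noncomputable def distances {α : Type*} [DecidableEq α] [Dist α] (S : Finset α) : Finset ℝ :=
  S.offDiag.image fun pq => dist pq.1 pq.2

noncomputable def spanningPairs {α : Type*} [DecidableEq α] [Dist α] (P : Finset α) (t : ℝ) :
    Finset (Finset α) :=
  (P.powersetCard 2).filter fun s => ∀ a ∈ s, ∀ b ∈ s, a ≠ b → dist a b = t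

lemma Finset.two_mul_choose_two_card_eq_card_offDiag {α : Type*} [DecidableEq α] (s : Finset α) :
    2 * (#s).choose 2 = #s.offDiag := by
  rw [offDiag_card, Nat.choose_two_right, Nat.mul_div_cancel' (Nat.even_mul_pred_self _).two_dvd,
    Nat.mul_sub_one]

lemma Finset.eq_pair_of_card_eq_two_of_mem_offDiag {α : Type*} [DecidableEq α] {s : Finset α}
    {a b : α} (hs : #s = 2) (hab : (a, b) ∈ s.offDiag) : s = {a, b} := by
  rw [mem_offDiag] at hab
  obtain ⟨ha, hb, hne⟩ := hab
  exact (eq_of_subset_of_card_le (insert_subset ha (singleton_subset_iff.2 hb))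
    (by rw [hs, card_pair hne])).symm

lemma Finset.pairwiseDisjoint_offDiag_of_card_eq_two {α : Type*} [DecidableEq α] :
    {s : Finset α | #s = 2}.PairwiseDisjoint offDiag := by
  intro s hs s' hs' hne
  refine disjoint_left.2 fun ⟨a, b⟩ h h' => hne ?_
  rw [eq_pair_of_card_eq_two_of_mem_offDiag hs h, eq_pair_of_card_eq_two_of_mem_offDiag hs' h']

section PseudoMetric

variable {α : Type*} [DecidableEq α] [PseudoMetricSpace α]

lemma mem_spanningPairs {P s : Finset α} {t : ℝ} :
    s ∈ spanningPairs P t ↔ s ⊆ P ∧ #s = 2 ∧ ∀ a ∈ s, ∀ b ∈ s, a ≠ b → dist a b = t := by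
  simp only [spanningPairs, mem_filter, mem_powersetCard, and_assoc]

lemma card_spanningPairs_le_choose_two (S : Finset α) (t : ℝ) :
    #(spanningPairs S t) ≤ (#S).choose 2 :=
  (card_filter_le _ _).trans (card_powersetCard 2 S).le

lemma filter_offDiag_dist_eq_biUnion (S : Finset α) (t : ℝ) :
    S.offDiag.filter (fun pq => dist pq.1 pq.2 = t) = (spanningPairs S t).biUnion offDiag := by
  ext ⟨a, b⟩
  simp only [mem_filter, mem_biUnion, mem_spanningPairs]
  constructor
  · rintro ⟨hab, rfl⟩
    obtain ⟨ha, hb, hne⟩ := mem_offDiag.1 hab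
    refine ⟨{a, b}, ⟨insert_subset ha (singleton_subset_iff.2 hb), card_pair hne, ?_⟩,
      by simp [hne]⟩
    simp only [mem_insert, mem_singleton]
    rintro x (rfl | rfl) y (rfl | rfl) hxy <;>
      first | exact absurd rfl hxy | rfl | exact dist_comm _ _
  · rintro ⟨s, ⟨hsS, -, hdist⟩, hab⟩
    obtain ⟨ha, hb, hne⟩ := mem_offDiag.1 hab
    exact ⟨mem_offDiag.2 ⟨hsS ha, hsS hb, hne⟩, hdist a ha b hb hne⟩

lemma card_filter_offDiag_dist_eq (S : Finset α) (t : ℝ) :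
    #(S.offDiag.filter fun pq => dist pq.1 pq.2 = t) = 2 * #(spanningPairs S t) := by
  rw [filter_offDiag_dist_eq_biUnion, card_biUnion
    (pairwiseDisjoint_offDiag_of_card_eq_two.subset fun s hs => (mem_spanningPairs.1 hs).2.1)]
  rw [sum_congr rfl fun s hs => by rw [offDiag_card, (mem_spanningPairs.1 hs).2.1], sum_const,
    smul_eq_mul, mul_comm]

/-- Each distance other than `t` is attained by at least two ordered pairs, `(a, b)` and
`(b, a)`. -/
lemma two_mul_card_distances_add_card_filter_le (S : Finset α) (t : ℝ) :
    2 * #(distances S) + #(S.offDiag.filter fun pq => dist pq.1 pq.2 = t) ≤ #S.offDiag + 2 := by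
  set d : α × α → ℝ := fun pq => dist pq.1 pq.2
  set A := S.offDiag.filter fun pq => ¬dist pq.1 pq.2 = t
  have hsplit : #(S.offDiag.filter fun pq => dist pq.1 pq.2 = t) + #A = #S.offDiag :=
    card_filter_add_card_filter_not _
  have hcover : distances S ⊆ insert t (A.image d) := by
    intro x hx
    obtain ⟨pq, hpq, rfl⟩ := mem_image.1 hx
    by_cases ht : d pq = t
    · exact ht ▸ mem_insert_self _ _
    · exact mem_insert_of_mem (mem_image_of_mem d (mem_filter.2 ⟨hpq, ht⟩))
  have hfibres : 2 * #(A.image d) ≤ #A := by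
    refine mul_card_image_le_card A 2 fun x hx => ?_
    obtain ⟨⟨a, b⟩, habA, rfl⟩ := mem_image.1 hx
    obtain ⟨habS, hne⟩ := mem_filter.1 habA
    obtain ⟨ha, hb, hab⟩ := mem_offDiag.1 habS
    have hba : (b, a) ∈ A := mem_filter.2 ⟨mem_offDiag.2 ⟨hb, ha, hab.symm⟩, by rwa [dist_comm]⟩
    calc 2 = #{(a, b), (b, a)} := (card_pair (by simp [hab])).symm
      _ ≤ _ := card_le_card <| by
        rw [insert_subset_iff, singleton_subset_iff]
        exact ⟨mem_filter.2 ⟨mem_filter.2 ⟨habS, hne⟩, rfl⟩, mem_filter.2 ⟨hba, dist_comm b a⟩⟩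
  have := (card_le_card hcover).trans (card_insert_le t (A.image d))
  omega

lemma card_distances_add_card_spanningPairs_le (S : Finset α) (t : ℝ) :
    #(distances S) + #(spanningPairs S t) ≤ (#S).choose 2 + 1 := by
  have := two_mul_card_distances_add_card_filter_le S t
  rw [card_filter_offDiag_dist_eq, ← two_mul_choose_two_card_eq_card_offDiag] at this
  omega

lemma exists_subset_card_eq_le_card_spanningPairs {P : Finset α} {k j : ℕ} {t : ℝ}
    (hkP : k ≤ #P) (hjk : 2 * j ≤ k) (hj : j ≤ #(spanningPairs P t)) :
    ∃ S ⊆ P, #S = k ∧ j ≤ #(spanningPairs S t) := by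
  obtain ⟨T, hT, rfl⟩ := exists_subset_card_eq hj
  have hmem : ∀ s ∈ T, s ⊆ P ∧ #s = 2 ∧ ∀ a ∈ s, ∀ b ∈ s, a ≠ b → dist a b = t :=
    fun s hs => mem_spanningPairs.1 (hT hs)
  have hUP : T.biUnion id ⊆ P := biUnion_subset.2 fun s hs => (hmem s hs).1
  have hUk : #(T.biUnion id) ≤ k := calc
    #(T.biUnion id) ≤ ∑ s ∈ T, #s := card_biUnion_le
    _ = 2 * #T := by
      rw [sum_congr rfl fun s hs => (hmem s hs).2.1, sum_const, smul_eq_mul, mul_comm]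
    _ ≤ k := hjk
  obtain ⟨S, hUS, hSP, hSk⟩ := exists_subsuperset_card_eq hUP hUk hkP
  refine ⟨S, hSP, hSk, card_le_card fun s hs => mem_spanningPairs.2 ?_⟩
  exact ⟨(subset_biUnion_of_mem id hs).trans hUS, (hmem s hs).2⟩

lemma card_spanningPairs_le_of_forall_card_distances {P : Finset α} {k : ℕ} (hkP : k ≤ #P)
    (hloc : ∀ S ⊆ P, #S = k → k.choose 2 - k / 2 + 2 ≤ #(distances S)) (t : ℝ) :
    #(spanningPairs P t) ≤ k / 2 - 1 := by
  by_contra! hmany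
  obtain ⟨S, hSP, hSk, hspan⟩ :=
    exists_subset_card_eq_le_card_spanningPairs (t := t) hkP (Nat.mul_div_le k 2) (by omega)
  have hupper := card_distances_add_card_spanningPairs_le S t
  have hchoose := card_spanningPairs_le_choose_two S t
  have hlower := hloc S hSP hSk
  rw [hSk] at hupper hchoose
  omega

end PseudoMetric

section Metric

variable {α : Type*} [DecidableEq α] [MetricSpace α]

lemma pos_of_mem_distances {S : Finset α} {d : ℝ} (hd : d ∈ distances S) : 0 < d := by
  obtain ⟨⟨a, b⟩, hab, rfl⟩ := mem_image.1 hd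
  exact dist_pos.2 (mem_offDiag.1 hab).2.2

lemma choose_two_le_mul_card_distances {P : Finset α} {r : ℕ}
    (hsparse : ∀ t : ℝ, 0 < t → #(spanningPairs P t) ≤ r) :
    (#P).choose 2 ≤ r * #(distances P) := by
  suffices 2 * (#P).choose 2 ≤ 2 * (r * #(distances P)) by omega
  calc 2 * (#P).choose 2 = #P.offDiag := two_mul_choose_two_card_eq_card_offDiag P
    _ = ∑ d ∈ distances P, #(P.offDiag.filter fun pq => dist pq.1 pq.2 = d) :=
      card_eq_sum_card_image _ _
    _ = ∑ d ∈ distances P, 2 * #(spanningPairs P d) :=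
      sum_congr rfl fun d _ => card_filter_offDiag_dist_eq P d
    _ ≤ ∑ _d ∈ distances P, 2 * r :=
      sum_le_sum fun d hd => Nat.mul_le_mul_left 2 (hsparse d (pos_of_mem_distances hd))
    _ = 2 * (r * #(distances P)) := by rw [sum_const, smul_eq_mul]; ring

end Metric

theorem local_to_global_quadratic (k : ℕ) (hk : 4 ≤ k)
    (P : Finset (EuclideanSpace ℝ (Fin 2))) (hkn : k ≤ P.card)
    (hloc : ∀ S ⊆ P, S.card = k →
      k.choose 2 - k / 2 + 2 ≤ ((S.offDiag).image fun pq => dist pq.1 pq.2).card) :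
    (∀ t : ℝ, 0 < t →
      ((P.powersetCard 2).filter fun s =>
        ∀ a ∈ s, ∀ b ∈ s, a ≠ b → dist a b = t).card ≤ k / 2 - 1) ∧
    ((P.card.choose 2 : ℝ) / ((k / 2 : ℕ) - 1 : ℝ) ≤
      (((P.offDiag).image fun pq => dist pq.1 pq.2).card : ℝ)) := by
  have hsparse : ∀ t : ℝ, 0 < t → #(spanningPairs P t) ≤ k / 2 - 1 :=
    fun t _ => card_spanningPairs_le_of_forall_card_distances hkn hloc t
  refine ⟨hsparse, ?_⟩
  have hcount : (#P).choose 2 ≤ (k / 2 - 1) * #(distances P) :=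
    choose_two_le_mul_card_distances hsparse
  have hcast : ((k / 2 - 1 : ℕ) : ℝ) = ((k / 2 : ℕ) : ℝ) - 1 := by
    rw [Nat.cast_sub (by omega), Nat.cast_one]
  rw [← hcast]
  exact div_le_of_le_mul₀ (Nat.cast_nonneg _) (Nat.cast_nonneg _)
    (by rw [mul_comm]; exact_mod_cast hcount)
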